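/- Let X and Y be real symmetric n×n matrices with X positive definite, and let S be the 2n×2n block matrix S = ((X^{1/2}, 0),(X^{−1/2}Y, X^{−1/2})), where X^{1/2} is the positive square root of X. Then S is symplectic, and G := SᵀS equals the block matrix ((X + Y X⁻¹ Y, Y X⁻¹),(X⁻¹ Y, X⁻¹)); in particular G is symmetric, positive definite, and symplectic. -/

import Mathlib

open Matrix

noncomputable section

/-- The standard symplectic matrix `J = ((0, I), (-I, 0))`. -/
def stdJ (n : ℕ) : Matrix (Fin n ⊕ Fin n) (Fin n ⊕ Fin n) ℝ :=
  Matrix.fromBlocks 0 1 (-1) 0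

/-- The square root of a positive semidefinite matrix, with the definition it had in
Mathlib (December 2024), where it was `Matrix.PosSemidef.sqrt`. -/
def Matrix.PosSemidef.sqrt {n : Type*} [Fintype n] [DecidableEq n] {A : Matrix n n ℝ}
    (hA : A.PosSemidef) : Matrix n n ℝ :=
  (hA.1.eigenvectorUnitary : Matrix n n ℝ) * diagonal ((↑) ∘ (√·) ∘ hA.1.eigenvalues) *
    (star hA.1.eigenvectorUnitary : Matrix n n ℝ)

/-- A real `2n × 2n` matrix is symplectic if `Sᵀ J S = J`. -/
def IsSymplectic {n : ℕ} (S : Matrix (Fin n ⊕ Fin n) (Fin n ⊕ Fin n) ℝ) : Prop :=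
  Sᵀ * stdJ n * S = stdJ n

/-! `hA.sqrt` is Mathlib's `CFC.sqrt A`, hence a symmetric square root `R` of `X`. With it, `S` is a
lower block-triangular member of Mathlib's `symplecticGroup` (whose `J` is `-stdJ n`), so `S` is
invertible, which makes `SᵀS` positive definite, and `SᵀS` is symplectic as a product of
symplectic matrices. -/

namespace Matrix.PosSemidef

open scoped MatrixOrder

variable {n : Type*} [Fintype n] [DecidableEq n] {A : Matrix n n ℝ} (hA : A.PosSemidef)

theorem sqrt_eq_cfcSqrt : hA.sqrt = CFC.sqrt A := by
  rw [CFC.sqrt_eq_cfc, cfc_nnreal_eq_real _ A, hA.1.cfc_eq]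
  simp [Matrix.PosSemidef.sqrt, IsHermitian.cfc, Function.comp_def,
    max_eq_left (hA.eigenvalues_nonneg _)]

theorem sqrt_mul_self : hA.sqrt * hA.sqrt = A := by
  rw [hA.sqrt_eq_cfcSqrt]
  exact CFC.sqrt_mul_sqrt_self A hA.nonneg

theorem transpose_sqrt : hA.sqrtᵀ = hA.sqrt := by
  rw [hA.sqrt_eq_cfcSqrt, ← conjTranspose_eq_transpose_of_trivial]
  exact (CFC.sqrt_nonneg A).isSelfAdjoint

end Matrix.PosSemidef

theorem stdJ_eq_neg_J (n : ℕ) : stdJ n = -J (Fin n) ℝ := by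
  simp [stdJ, J, fromBlocks_neg]

theorem isSymplectic_iff_mem_symplecticGroup {n : ℕ}
    {S : Matrix (Fin n ⊕ Fin n) (Fin n ⊕ Fin n) ℝ} :
    IsSymplectic S ↔ S ∈ symplecticGroup (Fin n) ℝ := by
  rw [SymplecticGroup.mem_iff', IsSymplectic, stdJ_eq_neg_J, Matrix.mul_neg, Matrix.neg_mul,
    neg_inj]

section

variable {l K : Type*} [Fintype l] [DecidableEq l] [CommRing K] {R Y : Matrix l l K}

theorem fromBlocks_mem_symplecticGroup (hR : IsUnit R.det) (hRs : R.IsSymm) (hY : Y.IsSymm) :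
    fromBlocks R 0 (R⁻¹ * Y) R⁻¹ ∈ symplecticGroup l K := by
  rw [SymplecticGroup.fromBlocks_mem_iff, transpose_mul, transpose_nonsing_inv, hRs.eq, hY.eq]
  refine ⟨?_, by simp, by simp [mul_nonsing_inv R hR]⟩
  rw [← Matrix.mul_assoc, mul_nonsing_inv R hR, Matrix.mul_assoc, nonsing_inv_mul R hR,
    Matrix.one_mul, Matrix.mul_one]

theorem transpose_fromBlocks_mul_self (hRs : R.IsSymm) (hY : Y.IsSymm) :
    (fromBlocks R 0 (R⁻¹ * Y) R⁻¹)ᵀ * fromBlocks R 0 (R⁻¹ * Y) R⁻¹ =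
      fromBlocks (R * R + Y * (R * R)⁻¹ * Y) (Y * (R * R)⁻¹) ((R * R)⁻¹ * Y) (R * R)⁻¹ := by
  rw [fromBlocks_transpose, fromBlocks_multiply, transpose_mul, transpose_nonsing_inv, hRs.eq,
    hY.eq, Matrix.mul_inv_rev]
  simp [Matrix.mul_assoc]

end

theorem symplectic_block_sqrt_general {n : ℕ}
    (X Y : Matrix (Fin n) (Fin n) ℝ) (hYsymm : Y.IsSymm)
    (hX : X.PosDef)
    (S : Matrix (Fin n ⊕ Fin n) (Fin n ⊕ Fin n) ℝ)
    (hS : S = Matrix.fromBlocks hX.posSemidef.sqrt 0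
      (hX.posSemidef.sqrt⁻¹ * Y) hX.posSemidef.sqrt⁻¹) :
    IsSymplectic S ∧
    Sᵀ * S = Matrix.fromBlocks (X + Y * X⁻¹ * Y) (Y * X⁻¹) (X⁻¹ * Y) X⁻¹ ∧
    (Sᵀ * S).IsSymm ∧ (Sᵀ * S).PosDef ∧ IsSymplectic (Sᵀ * S) := by
  set R := hX.posSemidef.sqrt
  have hRR : R * R = X := hX.posSemidef.sqrt_mul_self
  have hRs : R.IsSymm := hX.posSemidef.transpose_sqrt
  have hR : IsUnit R.det := by
    have hRR_det : IsUnit (R * R).det := hRR ▸ hX.det_pos.ne'.isUnit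
    exact isUnit_of_mul_isUnit_left (det_mul R R ▸ hRR_det)
  have hSymp : S ∈ symplecticGroup (Fin n) ℝ := hS ▸ fromBlocks_mem_symplecticGroup hR hRs hYsymm
  have hSinj : Function.Injective S.mulVec :=
    mulVec_injective_iff_isUnit.mpr <|
      (isUnit_iff_isUnit_det S).mpr (SymplecticGroup.symplectic_det hSymp)
  refine ⟨isSymplectic_iff_mem_symplecticGroup.mpr hSymp, ?_, isSymm_transpose_mul_self S,
    ?_, isSymplectic_iff_mem_symplecticGroup.mpr
      ((symplecticGroup (Fin n) ℝ).mul_mem (SymplecticGroup.transpose_mem hSymp) hSymp)⟩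
  · rw [hS, transpose_fromBlocks_mul_self hRs hYsymm, hRR]
  · simpa [conjTranspose_eq_transpose_of_trivial] using PosDef.conjTranspose_mul_self S hSinj

/-- For `X, Y` symmetric with `X` positive definite, the block matrix
`S = ((X^{1/2}, 0), (X^{-1/2}Y, X^{-1/2}))` is symplectic and
`G = SᵀS = ((X + Y X⁻¹ Y, Y X⁻¹), (X⁻¹ Y, X⁻¹))` is symmetric, positive definite
and symplectic. -/
theorem symplectic_block_sqrt {n : ℕ} (hn : 1 ≤ n)
    (X Y : Matrix (Fin n) (Fin n) ℝ) (hXsymm : X.IsSymm) (hYsymm : Y.IsSymm)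
    (hX : X.PosDef)
    (S : Matrix (Fin n ⊕ Fin n) (Fin n ⊕ Fin n) ℝ)
    (hS : S = Matrix.fromBlocks hX.posSemidef.sqrt 0
      (hX.posSemidef.sqrt⁻¹ * Y) hX.posSemidef.sqrt⁻¹) :
    IsSymplectic S ∧
    Sᵀ * S = Matrix.fromBlocks (X + Y * X⁻¹ * Y) (Y * X⁻¹) (X⁻¹ * Y) X⁻¹ ∧
    (Sᵀ * S).IsSymm ∧ (Sᵀ * S).PosDef ∧ IsSymplectic (Sᵀ * S) :=
  symplectic_block_sqrt_general X Y hYsymm hX S hS
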